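/- arXiv:1104.0577 — 2 statements merged into one kernel-verified Lean document; each statement's English description precedes it below -/
import Mathlib

section
/- The uniform 1-variation bound for the hyperviscous heat kernel: for every ε > 0, the function K_ε''(x), where K_ε(x) = Σ_{k∈ℤ} cos(kx)/(1+k²+ε²k⁴), satisfies |K_ε''(x)| ≤ 1 + π²/3 + π·cosh((|x|−π)/ε)/(ε·sinh(π/ε)) for x ∈ [−π, π]. -/
open Real

/-!
For `k ≠ 0`, `1/(1+ε²k²) - k²/(1+k²+ε²k⁴) = 1/((1+ε²k²)(1+k²+ε²k⁴)) ≤ 1/k²`, and the difference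
is `1` at `k = 0`. So the series for `-K_ε''(x)` differs from `∑ cos(kx)/(1+ε²k²)` by a series
of total size at most `1 + ∑_{k≠0} 1/k² = 1 + π²/3`. The latter series is the Fourier series of
the `2π`-periodic function equal to `(π/ε) cosh((y-π)/ε)/sinh(π/ε)` on `[0, 2π]`, evaluated at
`y = |x|`; its Fourier coefficients are integrals of `exp(-iky) cosh((y-π)/ε)`, which have an
explicit primitive.
-/

-- The `k = 0` term is `1 / 0 = 0`.
theorem hasSum_int_one_div_sq : HasSum (fun k : ℤ => 1 / (k : ℝ) ^ 2) (π ^ 2 / 3) := by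
  have h := HasSum.of_nat_of_neg (f := fun k : ℤ => 1 / (k : ℝ) ^ 2)
    (by simpa using hasSum_zeta_two) (by simpa using hasSum_zeta_two)
  rw [Int.cast_zero, zero_pow two_ne_zero, div_zero, sub_zero] at h
  exact (show π ^ 2 / 3 = π ^ 2 / 6 + π ^ 2 / 6 by ring) ▸ h

theorem hasSum_update_int_one_div_sq :
    HasSum (Function.update (fun k : ℤ => 1 / (k : ℝ) ^ 2) 0 1) (1 + π ^ 2 / 3) := by
  simpa using hasSum_int_one_div_sq.update 0 1

theorem one_div_one_add_sq_le_update (k : ℤ) :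
    1 / (1 + (k : ℝ) ^ 2) ≤ Function.update (fun k : ℤ => 1 / (k : ℝ) ^ 2) 0 1 k := by
  rcases eq_or_ne k 0 with rfl | hk
  · simp
  · rw [Function.update_of_ne hk]
    have : (k : ℝ) ≠ 0 := by exact_mod_cast hk
    gcongr
    linarith

theorem summable_one_div_sq_add_int_sq (t : ℝ) :
    Summable fun k : ℤ => 1 / (t ^ 2 + (k : ℝ) ^ 2) := by
  refine hasSum_int_one_div_sq.summable.of_norm_bounded_eventually ?_
  filter_upwards [Filter.eventually_cofinite_ne 0] with k hk
  rw [Real.norm_of_nonneg (by positivity)]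
  have : (k : ℝ) ≠ 0 := by exact_mod_cast hk
  gcongr
  nlinarith

theorem hasDerivAt_exp_mul_cosh_primitive {c d u : ℂ} (h : c ^ 2 - d ^ 2 ≠ 0) (x : ℝ) :
    HasDerivAt
      (fun y : ℝ => Complex.exp (c * y) *
        (c * Complex.cosh (d * y + u) - d * Complex.sinh (d * y + u)) / (c ^ 2 - d ^ 2))
      (Complex.exp (c * x) * Complex.cosh (d * x + u)) x := by
  have hexp : HasDerivAt (fun z : ℂ => Complex.exp (c * z)) (Complex.exp (c * x) * c) x := by
    simpa using ((hasDerivAt_id (x : ℂ)).const_mul c).cexp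
  have hlin : HasDerivAt (fun z : ℂ => d * z + u) d x := by
    simpa using ((hasDerivAt_id (x : ℂ)).const_mul d).add_const u
  have hcombo := (hlin.ccosh.const_mul c).fun_sub (hlin.csinh.const_mul d)
  refine HasDerivAt.comp_ofReal (e := fun z : ℂ => Complex.exp (c * z) *
    (c * Complex.cosh (d * z + u) - d * Complex.sinh (d * z + u)) / (c ^ 2 - d ^ 2)) ?_
  refine ((hexp.mul hcombo).div_const (c ^ 2 - d ^ 2)).congr_deriv ?_
  rw [div_eq_iff h]
  ring

local instance : Fact (0 < 2 * π) := ⟨two_pi_pos⟩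

-- The `2π`-periodic function equal to `cosh (t * (y - π))` for `y ∈ [0, 2π]`.
noncomputable def periodicCosh (t : ℝ) : C(AddCircle (2 * π), ℂ) :=
  ⟨fun p => (cosh (t * ‖p - ((π : ℝ) : AddCircle (2 * π))‖) : ℂ), by fun_prop⟩

theorem periodicCosh_coe (t : ℝ) {y : ℝ} (hy : y ∈ Set.Icc 0 (2 * π)) :
    periodicCosh t y = (cosh (t * (y - π)) : ℂ) := by
  have hnorm : ‖((y - π : ℝ) : AddCircle (2 * π))‖ = |y - π| := by
    rw [AddCircle.norm_coe_eq_abs_iff _ two_pi_pos.ne', abs_of_pos two_pi_pos, abs_le]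
    constructor <;> linarith [hy.1, hy.2]
  simp only [periodicCosh, ContinuousMap.coe_mk, ← AddCircle.coe_sub, hnorm]
  congr 1
  rcases abs_choice (y - π) with h | h <;> rw [h]
  rw [mul_neg, cosh_neg]

theorem fourier_coe_two_pi (n : ℤ) (y : ℝ) :
    fourier n (y : AddCircle (2 * π)) = Complex.exp ((n * y : ℝ) * Complex.I) := by
  rw [fourier_coe_apply]
  congr 1
  field_simp
  push_cast
  ring

theorem fourierCoeff_periodicCosh {t : ℝ} (ht : t ≠ 0) (n : ℤ) :
    fourierCoeff (periodicCosh t) n = ((t * sinh (t * π) / (π * (t ^ 2 + n ^ 2)) : ℝ) : ℂ) := by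
  set c : ℂ := -(n * Complex.I)
  have hc : c ^ 2 - (t : ℂ) ^ 2 = -((t ^ 2 + n ^ 2 : ℝ) : ℂ) := by
    simp only [c]
    push_cast
    ring_nf
    rw [Complex.I_sq]
    ring
  have hne : c ^ 2 - (t : ℂ) ^ 2 ≠ 0 := by
    rw [hc, neg_ne_zero, Complex.ofReal_ne_zero]
    positivity
  have hintegrand : Set.EqOn (fun y : ℝ => fourier (-n) (y : AddCircle (2 * π)) • periodicCosh t y)
      (fun y : ℝ => Complex.exp (c * y) * Complex.cosh (t * y + -(t * π)))
      (Set.uIcc 0 (0 + 2 * π)) := by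
    intro y hy
    rw [zero_add, Set.uIcc_of_le two_pi_pos.le] at hy
    simp only [smul_eq_mul, fourier_coe_two_pi, periodicCosh_coe t hy, c]
    push_cast
    ring_nf
  rw [fourierCoeff_eq_intervalIntegral _ n 0, intervalIntegral.integral_congr hintegrand,
    intervalIntegral.integral_eq_sub_of_hasDerivAt
      (fun y _ => hasDerivAt_exp_mul_cosh_primitive hne y)
      ((Continuous.intervalIntegrable (by fun_prop) _ _))]
  have hper : Complex.exp (c * ((0 + 2 * π : ℝ) : ℂ)) = 1 := by
    rw [show c * ((0 + 2 * π : ℝ) : ℂ) = ((-n : ℤ) : ℂ) * (2 * π * Complex.I) by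
      simp only [c]; push_cast; ring, Complex.exp_int_mul_two_pi_mul_I]
  have hright : (t : ℂ) * ((0 + 2 * π : ℝ) : ℂ) + -(t * π) = ((t * π : ℝ) : ℂ) := by
    push_cast; ring
  have hleft : (t : ℂ) * ((0 : ℝ) : ℂ) + -(t * π) = -((t * π : ℝ) : ℂ) := by
    push_cast; ring
  have hπ : (π : ℂ) ≠ 0 := Complex.ofReal_ne_zero.mpr pi_ne_zero
  rw [hper, hright, hleft, Complex.ofReal_zero, mul_zero, Complex.exp_zero, Complex.cosh_neg,
    Complex.sinh_neg, ← Complex.ofReal_cosh, ← Complex.ofReal_sinh, hc, Complex.real_smul]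
  have hden : (t ^ 2 + n ^ 2 : ℂ) ≠ 0 := by
    exact_mod_cast (show t ^ 2 + (n : ℝ) ^ 2 ≠ 0 by positivity)
  push_cast
  field_simp
  ring

theorem hasSum_cos_div_sq_add_sq {t : ℝ} (ht : t ≠ 0) {y : ℝ} (hy : y ∈ Set.Icc 0 (2 * π)) :
    HasSum (fun k : ℤ => cos (k * y) / (t ^ 2 + k ^ 2))
      (π * cosh (t * (y - π)) / (t * sinh (t * π))) := by
  set K := t * sinh (t * π) / π
  have hK : K ≠ 0 := by
    have : sinh (t * π) ≠ 0 := by simpa using mul_ne_zero ht pi_ne_zero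
    positivity
  have hcoeff : Summable (fourierCoeff (periodicCosh t)) := by
    rw [funext (fourierCoeff_periodicCosh ht), Complex.summable_ofReal]
    refine ((summable_one_div_sq_add_int_sq t).mul_left K).congr fun n => ?_
    simp only [K]
    field_simp
  have hre := (has_pointwise_sum_fourier_series_of_summable hcoeff (y : AddCircle (2 * π))).mapL
    Complex.reCLM
  simp only [Complex.reCLM_apply, fourierCoeff_periodicCosh ht, fourier_coe_two_pi, smul_eq_mul,
    Complex.re_ofReal_mul, Complex.exp_ofReal_mul_I_re, periodicCosh_coe t hy,
    Complex.ofReal_re] at hre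
  have hterm (k : ℤ) : K * (cos (k * y) / (t ^ 2 + k ^ 2)) =
      t * sinh (t * π) / (π * (t ^ 2 + k ^ 2)) * cos (k * y) := by
    simp only [K]
    field_simp
  have hsum : K * (π * cosh (t * (y - π)) / (t * sinh (t * π))) = cosh (t * (y - π)) := by
    simp only [K]
    field_simp
  rwa [← hasSum_mul_left_iff hK, hsum, funext hterm]

theorem hasSum_cos_div_one_add_sq_mul_sq {ε : ℝ} (hε : ε ≠ 0) {x : ℝ} (hx : x ∈ Set.Icc (-π) π) :
    HasSum (fun k : ℤ => cos (k * x) / (1 + ε ^ 2 * k ^ 2))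
      (π * cosh ((|x| - π) / ε) / (ε * sinh (π / ε))) := by
  have habs : |x| ∈ Set.Icc 0 (2 * π) :=
    ⟨abs_nonneg x, by linarith [abs_le.mpr hx, pi_pos]⟩
  have h := (hasSum_cos_div_sq_add_sq (inv_ne_zero hε) habs).mul_left (ε ^ 2)⁻¹
  have hterm (k : ℤ) : (ε ^ 2)⁻¹ * (cos (k * |x|) / (ε⁻¹ ^ 2 + k ^ 2)) =
      cos (k * x) / (1 + ε ^ 2 * k ^ 2) := by
    have hcos : cos (k * |x|) = cos (k * x) := by
      rcases abs_choice x with h | h <;> rw [h]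
      rw [mul_neg, cos_neg]
    rw [hcos]
    field_simp
  have hsum : (ε ^ 2)⁻¹ * (π * cosh (ε⁻¹ * (|x| - π)) / (ε⁻¹ * sinh (ε⁻¹ * π))) =
      π * cosh ((|x| - π) / ε) / (ε * sinh (π / ε)) := by
    rw [inv_mul_eq_div, inv_mul_eq_div]
    field_simp
  rwa [funext hterm, hsum] at h

theorem one_div_sub_sq_div_eq (ε k : ℝ) :
    1 / (1 + ε ^ 2 * k ^ 2) - k ^ 2 / (1 + k ^ 2 + ε ^ 2 * k ^ 4) =
      1 / ((1 + ε ^ 2 * k ^ 2) * (1 + k ^ 2 + ε ^ 2 * k ^ 4)) := by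
  field_simp
  ring

theorem abs_cos_div_sub_sq_mul_cos_div_le (ε k x : ℝ) :
    |cos x / (1 + ε ^ 2 * k ^ 2) - k ^ 2 * cos x / (1 + k ^ 2 + ε ^ 2 * k ^ 4)| ≤
      1 / (1 + k ^ 2) := by
  have hsplit : cos x / (1 + ε ^ 2 * k ^ 2) - k ^ 2 * cos x / (1 + k ^ 2 + ε ^ 2 * k ^ 4) =
      cos x * (1 / ((1 + ε ^ 2 * k ^ 2) * (1 + k ^ 2 + ε ^ 2 * k ^ 4))) := by
    rw [← one_div_sub_sq_div_eq]
    ring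
  rw [hsplit, abs_mul, abs_of_pos (a := 1 / _) (by positivity)]
  calc |cos x| * (1 / ((1 + ε ^ 2 * k ^ 2) * (1 + k ^ 2 + ε ^ 2 * k ^ 4)))
      ≤ 1 * (1 / (1 + k ^ 2)) := by
        gcongr
        · exact abs_cos_le_one x
        · nlinarith [sq_nonneg (ε * k), sq_nonneg (ε * k ^ 2), sq_nonneg k]
    _ = 1 / (1 + k ^ 2) := one_mul _

theorem norm_tsum_le_of_hasSum_of_norm_sub_le {ι E : Type*} [NormedAddCommGroup E]
    [CompleteSpace E]
    {a b : ι → E} {m : ι → ℝ} {A : E} {M : ℝ} (ha : HasSum a A) (hm : HasSum m M)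
    (h : ∀ k, ‖a k - b k‖ ≤ m k) : ‖∑' k, b k‖ ≤ ‖A‖ + M := by
  have hd : Summable fun k => a k - b k := hm.summable.of_norm_bounded h
  have hb : HasSum b (A - ∑' k, (a k - b k)) := by
    simpa using ha.sub hd.hasSum
  calc ‖∑' k, b k‖ = ‖A - ∑' k, (a k - b k)‖ := by rw [hb.tsum_eq]
    _ ≤ ‖A‖ + ‖∑' k, (a k - b k)‖ := norm_sub_le _ _
    _ ≤ ‖A‖ + M := by gcongr; exact tsum_of_norm_bounded hm h

/-- uniform bound on the second derivative of the hyperviscous heat kernel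
`K_ε(x) = Σ_{k∈ℤ} cos(kx)/(1+k²+ε²k⁴)`, whose second derivative is
`K_ε''(x) = -Σ_{k∈ℤ} k² cos(kx)/(1+k²+ε²k⁴)`. -/
theorem hyperviscous_kernel_second_derivative_bound (ε : ℝ) (hε : 0 < ε)
    (x : ℝ) (hx : x ∈ Set.Icc (-π) π) :
    |∑' k : ℤ, ((k : ℝ) ^ 2 * Real.cos (k * x)) / (1 + (k : ℝ) ^ 2 + ε ^ 2 * (k : ℝ) ^ 4)| ≤
      1 + π ^ 2 / 3 + π * Real.cosh ((|x| - π) / ε) / (ε * Real.sinh (π / ε)) := by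
  have hbound := norm_tsum_le_of_hasSum_of_norm_sub_le
    (hasSum_cos_div_one_add_sq_mul_sq hε.ne' hx) hasSum_update_int_one_div_sq
    fun k => (abs_cos_div_sub_sq_mul_cos_div_le ε k (k * x)).trans (one_div_one_add_sq_le_update k)
  have hF : 0 ≤ π * cosh ((|x| - π) / ε) / (ε * sinh (π / ε)) := by
    have := sinh_pos_iff.mpr (div_pos pi_pos hε)
    positivity
  rw [Real.norm_eq_abs, Real.norm_eq_abs, abs_of_nonneg hF] at hbound
  linarith
end

section
/- For every ε > 0 and x ∈ [−π, π], the Fourier series identity Σ_{k∈ℤ} cos(kx)/(1+ε²k²) = π·cosh((|x|−π)/ε)/(ε·sinh(π/ε)) holds. -/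
/-!
The function `x ↦ cosh ((x - π) / ε)` takes equal values at `0` and `2π`, and its continuous
`2π`-periodic extension agrees with `cosh ((|x| - π) / ε)` on `[-π, π]`. Since
`e^{cx} (a sinh (ax + b) - c cosh (ax + b))` is a primitive of `(a² - c²) e^{cx} cosh (ax + b)`,
its Fourier coefficients are `ε sinh (π / ε) / (π (1 + ε² n²))`. These are summable, so the
Fourier series converges pointwise to the function; its real part is the cosine series. Both
sides are even in `x`, so it suffices to take `x ∈ [0, π]`.
-/

open Real

theorem hasDerivAt_exp_mul_sinh_sub_cosh (a b c : ℂ) (x : ℝ) :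
    HasDerivAt (fun x : ℝ => Complex.exp (c * x) *
        (a * Complex.sinh (a * x + b) - c * Complex.cosh (a * x + b)))
      ((a ^ 2 - c ^ 2) * (Complex.exp (c * x) * Complex.cosh (a * x + b))) x := by
  have hc : HasDerivAt (fun z : ℂ => c * z) c x := by
    simpa using (hasDerivAt_id (x : ℂ)).const_mul c
  have hab : HasDerivAt (fun z : ℂ => a * z + b) a x := by
    simpa using ((hasDerivAt_id (x : ℂ)).const_mul a).add_const b
  exact (hc.cexp.mul ((hab.csinh.const_mul a).sub (hab.ccosh.const_mul c))).comp_ofReal.congr_deriv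
    (by simp only [Pi.sub_apply]; ring)

theorem mul_integral_exp_mul_cosh (a b c : ℂ) (x₁ x₂ : ℝ) :
    (a ^ 2 - c ^ 2) * ∫ x in x₁..x₂, Complex.exp (c * x) * Complex.cosh (a * x + b) =
      Complex.exp (c * x₂) * (a * Complex.sinh (a * x₂ + b) - c * Complex.cosh (a * x₂ + b)) -
        Complex.exp (c * x₁) * (a * Complex.sinh (a * x₁ + b) - c * Complex.cosh (a * x₁ + b)) := by
  rw [← intervalIntegral.integral_const_mul]
  exact intervalIntegral.integral_eq_sub_of_hasDerivAt
    (fun x _ => hasDerivAt_exp_mul_sinh_sub_cosh a b c x)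
    (Continuous.intervalIntegrable (by fun_prop) _ _)

theorem summable_one_div_one_add_mul_sq {ε : ℝ} (hε : ε ≠ 0) :
    Summable fun n : ℤ => 1 / (1 + ε ^ 2 * n ^ 2) := by
  refine .of_norm_bounded_eventually
    ((summable_one_div_int_pow.mpr one_lt_two).mul_left (ε ^ 2)⁻¹) ?_
  filter_upwards [Filter.eventually_cofinite_ne 0] with n hn
  have hn' : (n : ℝ) ≠ 0 := by exact_mod_cast hn
  rw [norm_of_nonneg (by positivity), ← one_div, one_div_mul_one_div]
  exact one_div_le_one_div_of_le (by positivity) (by linarith)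

theorem hasSum_fourierCoeffOn_mul_exp {T : ℝ} (hT : 0 < T) {f : ℝ → ℂ}
    (hf : ContinuousOn f (Set.Icc 0 T)) (hfT : f 0 = f T)
    (hsum : Summable (fourierCoeffOn hT f)) {x : ℝ} (hx : x ∈ Set.Ico 0 T) :
    HasSum (fun n : ℤ => fourierCoeffOn hT f n * Complex.exp (2 * π * Complex.I * n * x / T))
      (f x) := by
  have : Fact (0 < T) := ⟨hT⟩
  let F : C(AddCircle T, ℂ) := ⟨AddCircle.liftIco T 0 f, AddCircle.liftIco_zero_continuous hfT hf⟩
  have hcoeff : fourierCoeff F = fourierCoeffOn hT f := by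
    ext n
    rw [fourierCoeff_eq_intervalIntegral _ _ 0, fourierCoeffOn_eq_integral, zero_add, sub_zero]
    simp only [fourier_coe_apply]
    congr 1
    refine intervalIntegral.integral_congr_Ioo_of_le hT.le fun y hy => ?_
    rw [ContinuousMap.coe_mk, AddCircle.liftIco_zero_coe_apply (Set.Ioo_subset_Ico_self hy)]
  have hF := has_pointwise_sum_fourier_series_of_summable (hcoeff ▸ hsum) x
  rw [hcoeff] at hF
  simpa only [fourier_coe_apply, smul_eq_mul, F, ContinuousMap.coe_mk,
    AddCircle.liftIco_zero_coe_apply hx] using hF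

theorem fourierCoeffOn_cosh {ε : ℝ} (hε : ε ≠ 0) (n : ℤ) :
    fourierCoeffOn two_pi_pos (fun x : ℝ => Complex.cosh ((x - π) / ε)) n =
      ((ε * sinh (π / ε) / (π * (1 + ε ^ 2 * n ^ 2)) : ℝ) : ℂ) := by
  set a : ℂ := (ε : ℂ)⁻¹
  set c : ℂ := -n * Complex.I
  have hεc : (ε : ℂ) ≠ 0 := by exact_mod_cast hε
  have hac : a ^ 2 - c ^ 2 = ((1 + ε ^ 2 * n ^ 2) / ε ^ 2 : ℝ) := by
    push_cast [a, c]
    rw [mul_pow, Complex.I_sq]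
    field_simp
    ring
  have hac0 : a ^ 2 - c ^ 2 ≠ 0 := by
    rw [hac]
    exact_mod_cast (by positivity : (0 : ℝ) < (1 + ε ^ 2 * n ^ 2) / ε ^ 2).ne'
  have hintegrand (x : ℝ) : fourier (-n) (x : AddCircle (2 * π - 0)) • Complex.cosh ((x - π) / ε)
      = Complex.exp (c * x) * Complex.cosh (a * x + -π * a) := by
    rw [fourier_coe_apply, smul_eq_mul]
    congr 2
    · push_cast [c]
      field_simp
      ring
    · simp only [a]
      ring
  have hexp : Complex.exp (c * (2 * π : ℝ)) = 1 := by
    rw [← Complex.exp_int_mul_two_pi_mul_I (-n)]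
    push_cast [c]
    ring_nf
  have hintegral : (a ^ 2 - c ^ 2) *
      ∫ x in (0 : ℝ)..2 * π, Complex.exp (c * x) * Complex.cosh (a * x + -π * a) =
        2 * a * Complex.sinh (π * a) := by
    rw [mul_integral_exp_mul_cosh, hexp,
      show a * ((2 * π : ℝ) : ℂ) + -π * a = π * a by push_cast; ring,
      show a * ((0 : ℝ) : ℂ) + -π * a = -(π * a) by push_cast; ring]
    simp only [Complex.ofReal_zero, mul_zero, Complex.exp_zero, Complex.sinh_neg, Complex.cosh_neg]
    ring
  rw [fourierCoeffOn_eq_integral, intervalIntegral.integral_congr fun x _ => hintegrand x,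
    eq_div_of_mul_eq hac0 ((mul_comm _ _).trans hintegral), hac, Complex.real_smul]
  push_cast [a]
  field_simp
  ring

theorem hasSum_cos_mul_div_one_add_mul_sq {ε : ℝ} (hε : ε ≠ 0) {x : ℝ} (hx : x ∈ Set.Icc 0 π) :
    HasSum (fun k : ℤ => cos (k * x) / (1 + ε ^ 2 * k ^ 2))
      (π * cosh ((x - π) / ε) / (ε * sinh (π / ε))) := by
  have hsum : Summable (fourierCoeffOn two_pi_pos fun x : ℝ => Complex.cosh ((x - π) / ε)) := by
    refine .of_norm (((summable_one_div_one_add_mul_sq hε).mul_left |ε * sinh (π / ε) / π|).congr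
      fun n => ?_)
    rw [fourierCoeffOn_cosh hε, Complex.norm_real, norm_eq_abs, ← div_div,
      abs_div (ε * sinh (π / ε) / π), abs_of_pos (by positivity : 0 < 1 + ε ^ 2 * (n : ℝ) ^ 2),
      mul_one_div]
  have hfourier := hasSum_fourierCoeffOn_mul_exp two_pi_pos (by fun_prop)
    (by push_cast; rw [zero_sub, neg_div, Complex.cosh_neg]; ring_nf) hsum
    ⟨hx.1, by linarith [hx.2, pi_pos]⟩
  have hcosh : π * cosh ((x - π) / ε) / (ε * sinh (π / ε)) =
      π / (ε * sinh (π / ε)) * (Complex.cosh ((x - π) / ε)).re := by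
    rw [← Complex.ofReal_sub, ← Complex.ofReal_div, Complex.cosh_ofReal_re]
    ring
  rw [hcosh]
  refine ((Complex.hasSum_re hfourier).mul_left (π / (ε * sinh (π / ε)))).congr_fun fun k => ?_
  rw [fourierCoeffOn_cosh hε, Complex.re_ofReal_mul,
    show 2 * π * Complex.I * k * x / (2 * π : ℝ) = (k * x : ℝ) * Complex.I by
      push_cast; field_simp, Complex.exp_ofReal_mul_I_re]
  field_simp

/-- the Fourier series identity
`Σ_{k∈ℤ} cos(kx)/(1+ε²k²) = π cosh((|x|-π)/ε)/(ε sinh(π/ε))` on `[-π,π]`. -/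
theorem fourier_series_cosh_identity (ε : ℝ) (hε : 0 < ε)
    (x : ℝ) (hx : x ∈ Set.Icc (-π) π) :
    ∑' k : ℤ, Real.cos (k * x) / (1 + ε ^ 2 * (k : ℝ) ^ 2) =
      π * Real.cosh ((|x| - π) / ε) / (ε * Real.sinh (π / ε)) := by
  have hcos (k : ℤ) : cos (k * x) = cos (k * |x|) := by
    rcases abs_choice x with h | h <;> simp [h]
  simp_rw [hcos]
  exact (hasSum_cos_mul_div_one_add_mul_sq hε.ne' ⟨abs_nonneg x, abs_le.mpr hx⟩).tsum_eq
end
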